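/- Let A be an n×n real symmetric matrix with rank(A) ≥ n−1, and let B = [[A, α],[αᵀ, b]] be an (n+1)×(n+1) real symmetric matrix such that det(A) and det(B) are not both zero. If det(A)·det(B) < 0 then q(B) = q(A) + 1, where q denotes the negative index of inertia. -/

import Mathlib

/-!
Since `det A * det B < 0`, `A` is invertible, and the Schur complement `s = b - αᵀ A⁻¹ α`
satisfies `det B = det A * s`, so `s < 0`. The substitution `x = (z - t • A⁻¹ α, t)` turns the
quadratic form of `B` into the orthogonal sum of that of `A` and `s t²`. The signature `sigNeg`
(the largest dimension of a negative-definite subspace) is an isometry invariant and additive on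
orthogonal sums, so it goes up by exactly one. Diagonalizing by an orthonormal eigenbasis
identifies `negInertia` with `sigNeg` of the quadratic form.
-/

open Matrix

/-- The negative index of inertia of a real symmetric matrix: the number of
negative eigenvalues counted with multiplicity. -/
noncomputable def negInertia {n : ℕ} (M : Matrix (Fin n) (Fin n) ℝ) : ℕ :=
  if h : M.IsHermitian then (Finset.univ.filter fun i => h.eigenvalues i < 0).card
  else 0

open QuadraticMap QuadraticForm

lemma Set.ncard_eq_ncard_preimage_inl_add_ncard_preimage_inr {α β : Type*} [Finite α] [Finite β]
    (s : Set (α ⊕ β)) : s.ncard = (Sum.inl ⁻¹' s).ncard + (Sum.inr ⁻¹' s).ncard := by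
  simp only [← Nat.card_coe_set_eq]
  exact (Nat.card_congr Equiv.subtypeSum).trans Nat.card_sum

namespace QuadraticMap

variable {R ι₁ ι₂ : Type*} [CommRing R] [Fintype ι₁] [Fintype ι₂]

def weightedSumSquaresSumElimIsometryEquivProd (w₁ : ι₁ → R) (w₂ : ι₂ → R) :
    (weightedSumSquares R (Sum.elim w₁ w₂)).IsometryEquiv
      ((weightedSumSquares R w₁).prod (weightedSumSquares R w₂)) where
  toLinearEquiv := LinearEquiv.sumArrowLequivProdArrow ι₁ ι₂ R R
  map_app' x := by simp [weightedSumSquares_apply, Fintype.sum_sum_type]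

end QuadraticMap

namespace QuadraticForm

variable {𝕜 M₁ M₂ : Type*} [Field 𝕜] [LinearOrder 𝕜] [IsStrictOrderedRing 𝕜]
  [AddCommGroup M₁] [Module 𝕜 M₁] [FiniteDimensional 𝕜 M₁]
  [AddCommGroup M₂] [Module 𝕜 M₂] [FiniteDimensional 𝕜 M₂]

lemma sigNeg_prod (Q₁ : QuadraticForm 𝕜 M₁) (Q₂ : QuadraticForm 𝕜 M₂) :
    sigNeg (Q₁.prod Q₂) = sigNeg Q₁ + sigNeg Q₂ := by
  have : Invertible (2 : 𝕜) := invertibleOfNonzero two_ne_zero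
  obtain ⟨w₁, e₁⟩ := Q₁.equivalent_weightedSumSquares
  obtain ⟨w₂, e₂⟩ := Q₂.equivalent_weightedSumSquares
  have e : (Q₁.prod Q₂).Equivalent (weightedSumSquares 𝕜 (Sum.elim w₁ w₂)) :=
    (e₁.prod e₂).trans ⟨(weightedSumSquaresSumElimIsometryEquivProd w₁ w₂).symm⟩
  rw [sigNeg_of_equiv_weightedSumSquares e, sigNeg_of_equiv_weightedSumSquares e₁,
    sigNeg_of_equiv_weightedSumSquares e₂, Set.ncard_eq_ncard_preimage_inl_add_ncard_preimage_inr]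
  rfl

lemma sigNeg_smul_sq_of_neg {s : 𝕜} (hs : s < 0) :
    sigNeg (s • QuadraticMap.sq : QuadraticForm 𝕜 𝕜) = 1 := by
  set Q : QuadraticForm 𝕜 𝕜 := s • QuadraticMap.sq
  have hneg : ((-Q).restrict ⊤).PosDef := fun x hx => by
    simpa [Q] using mul_neg_of_neg_of_pos hs (mul_self_pos.mpr (by simpa using hx))
  refine le_antisymm ?_ ?_
  · simpa using sigPos_le_finrank (-Q)
  · simpa using le_sigNeg_of_negDef Q hneg

end QuadraticForm

namespace Matrix

@[simp]
lemma toQuadraticForm'_apply {ι R : Type*} [Fintype ι] [DecidableEq ι] [CommRing R]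
    (M : Matrix ι ι R) (x : ι → R) : M.toQuadraticForm' x = x ⬝ᵥ M *ᵥ x := by
  simp [toQuadraticForm', toLinearMap₂'_apply']

noncomputable def IsHermitian.isometryEquivWeightedSumSquares {ι : Type*} [Fintype ι]
    [DecidableEq ι] {M : Matrix ι ι ℝ} (hM : M.IsHermitian) :
    (weightedSumSquares ℝ hM.eigenvalues).IsometryEquiv M.toQuadraticForm' where
  toLinearEquiv := UnitaryGroup.toLinearEquiv hM.eigenvectorUnitary
  map_app' y := by
    set U : Matrix ι ι ℝ := (hM.eigenvectorUnitary : Matrix ι ι ℝ)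
    have hdiag : Uᵀ * M * U = diagonal hM.eigenvalues := by
      simpa [U, star_eq_conjTranspose] using hM.conjStarAlgAut_star_eigenvectorUnitary
    rw [toQuadraticForm'_apply]
    show (U *ᵥ y) ⬝ᵥ M *ᵥ (U *ᵥ y) = _
    calc _ = y ⬝ᵥ (Uᵀ * M * U) *ᵥ y := by
          rw [← mulVec_mulVec, ← mulVec_mulVec, dotProduct_mulVec _ Uᵀ, vecMul_transpose]
      _ = _ := by
          simp only [hdiag, dotProduct, mulVec_diagonal, weightedSumSquares_apply, smul_eq_mul]
          exact Finset.sum_congr rfl fun i _ => by ring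

variable {R : Type*} {n : ℕ}

/-- The matrix `!![A, α; αᵀ, b]`. -/
def borderedMatrix (A : Matrix (Fin n) (Fin n) R) (α : Fin n → R) (b : R) :
    Matrix (Fin (n + 1)) (Fin (n + 1)) R :=
  reindex finSumFinEquiv finSumFinEquiv
    (fromBlocks A (replicateCol (Fin 1) α) (replicateRow (Fin 1) α) (of fun _ _ => b))

variable (A : Matrix (Fin n) (Fin n) R) (α : Fin n → R) (b : R)

@[simp] lemma borderedMatrix_castSucc_castSucc (i j : Fin n) :
    borderedMatrix A α b i.castSucc j.castSucc = A i j := by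
  simp [borderedMatrix]

@[simp] lemma borderedMatrix_castSucc_last (i : Fin n) :
    borderedMatrix A α b i.castSucc (Fin.last n) = α i := by
  simp [borderedMatrix]

@[simp] lemma borderedMatrix_last_castSucc (j : Fin n) :
    borderedMatrix A α b (Fin.last n) j.castSucc = α j := by
  simp [borderedMatrix]

@[simp] lemma borderedMatrix_last_last : borderedMatrix A α b (Fin.last n) (Fin.last n) = b := by
  simp [borderedMatrix]

lemma det_borderedMatrix [CommRing R] [Invertible A] :
    (borderedMatrix A α b).det = A.det * (b - α ⬝ᵥ ⅟A *ᵥ α) := by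
  rw [borderedMatrix, det_reindex_self, det_fromBlocks₁₁, det_fin_one]
  simp only [invOf_eq_nonsing_inv, sub_apply, of_apply, mul_apply, replicateRow_apply,
    replicateCol_apply, Finset.sum_mul, mul_assoc, dotProduct, mulVec, Finset.mul_sum]
  rw [Finset.sum_comm]

variable {A}

lemma isSymm_borderedMatrix (hA : A.IsSymm) : (borderedMatrix A α b).IsSymm :=
  (hA.fromBlocks (transpose_replicateCol α) (by ext; simp)).reindex _

variable [CommRing R]

lemma snoc_dotProduct_borderedMatrix_mulVec_snoc (x : Fin n → R) (t : R) :
    Fin.snoc x t ⬝ᵥ borderedMatrix A α b *ᵥ Fin.snoc x t =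
      x ⬝ᵥ A *ᵥ x + 2 * t * (α ⬝ᵥ x) + b * t ^ 2 := by
  have hmul : borderedMatrix A α b *ᵥ Fin.snoc x t =
      Fin.snoc (A *ᵥ x + t • α) (α ⬝ᵥ x + b * t) := by
    ext i
    induction i using Fin.lastCases <;>
      simp [mulVec, dotProduct, Fin.sum_univ_castSucc, mul_comm]
  calc Fin.snoc x t ⬝ᵥ borderedMatrix A α b *ᵥ Fin.snoc x t
      = x ⬝ᵥ (A *ᵥ x + t • α) + t * (α ⬝ᵥ x + b * t) := by
        simp only [hmul, dotProduct, Fin.sum_univ_castSucc, Fin.snoc_castSucc, Fin.snoc_last]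
    _ = _ := by
        rw [dotProduct_add, dotProduct_smul, dotProduct_comm x α, smul_eq_mul]
        ring

lemma snoc_sub_smul_dotProduct_borderedMatrix_mulVec (hA : A.IsSymm)
    {c : Fin n → R} (hc : A *ᵥ c = α) (z : Fin n → R) (t : R) :
    Fin.snoc (z - t • c) t ⬝ᵥ borderedMatrix A α b *ᵥ Fin.snoc (z - t • c) t =
      z ⬝ᵥ A *ᵥ z + (b - α ⬝ᵥ c) * t ^ 2 := by
  have hcA : c ᵥ* A = α := by rw [← mulVec_transpose, hA.eq, hc]
  rw [snoc_dotProduct_borderedMatrix_mulVec_snoc, mulVec_sub, mulVec_smul, hc, dotProduct_sub,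
    sub_dotProduct, sub_dotProduct, dotProduct_smul, smul_dotProduct, smul_dotProduct,
    dotProduct_mulVec c, hcA, dotProduct_sub, dotProduct_smul, dotProduct_comm z α]
  simp only [dotProduct_smul, smul_eq_mul, dotProduct_comm c α]
  ring

def snocShear (c : Fin n → R) : ((Fin n → R) × R) ≃ₗ[R] (Fin (n + 1) → R) where
  toFun p := Fin.snoc (p.1 - p.2 • c) p.2
  invFun y := (Fin.init y + y (Fin.last n) • c, y (Fin.last n))
  map_add' p q := by
    ext i
    induction i using Fin.lastCases <;>
      simp only [Prod.fst_add, Prod.snd_add, add_smul, Fin.snoc_last, Fin.snoc_castSucc,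
        Pi.add_apply, Pi.sub_apply, Pi.smul_apply, smul_eq_mul]
    ring
  map_smul' r p := by
    ext i
    induction i using Fin.lastCases <;>
      simp only [Prod.smul_fst, Prod.smul_snd, Fin.snoc_last, Fin.snoc_castSucc, RingHom.id_apply,
        Pi.sub_apply, Pi.smul_apply, smul_eq_mul]
    ring
  left_inv p := by simp
  right_inv y := by simp

lemma toQuadraticForm'_borderedMatrix_equivalent (hA : A.IsSymm) {c : Fin n → R}
    (hc : A *ᵥ c = α) :
    (borderedMatrix A α b).toQuadraticForm'.Equivalent
      (A.toQuadraticForm'.prod ((b - α ⬝ᵥ c) • QuadraticMap.sq)) :=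
  ⟨.symm
    { toLinearEquiv := snocShear c
      map_app' p := by
        simp [snocShear, snoc_sub_smul_dotProduct_borderedMatrix_mulVec α b hA hc, _root_.sq] }⟩

end Matrix

lemma negInertia_eq_sigNeg {n : ℕ} {M : Matrix (Fin n) (Fin n) ℝ} (hM : M.IsHermitian) :
    negInertia M = sigNeg M.toQuadraticForm' := by
  rw [negInertia, dif_pos hM,
    sigNeg_of_equiv_weightedSumSquares ⟨hM.isometryEquivWeightedSumSquares.symm⟩,
    Set.ncard_eq_toFinset_card']
  simp

theorem stmt1_general {n : ℕ} (A : Matrix (Fin n) (Fin n) ℝ) (hA : A.IsSymm)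
    (α : Fin n → ℝ) (b : ℝ) (B : Matrix (Fin (n + 1)) (Fin (n + 1)) ℝ)
    (hB1 : ∀ i j : Fin n, B i.castSucc j.castSucc = A i j)
    (hB2 : ∀ i : Fin n, B i.castSucc (Fin.last n) = α i)
    (hB3 : ∀ i : Fin n, B (Fin.last n) i.castSucc = α i)
    (hB4 : B (Fin.last n) (Fin.last n) = b)
    (hneg : A.det * B.det < 0) :
    negInertia B = negInertia A + 1 := by
  obtain rfl : B = borderedMatrix A α b := by
    ext i j
    induction i using Fin.lastCases <;> induction j using Fin.lastCases <;> simp [*]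
  have hdetA : A.det ≠ 0 := by rintro h; simp [h] at hneg
  have : Invertible A := A.invertibleOfIsUnitDet (isUnit_iff_ne_zero.mpr hdetA)
  set s := b - α ⬝ᵥ ⅟A *ᵥ α
  have hs : s < 0 := by
    rw [det_borderedMatrix, ← mul_assoc] at hneg
    exact neg_of_mul_neg_right hneg (mul_self_nonneg _)
  have hc : A *ᵥ (⅟A *ᵥ α) = α := by rw [mulVec_mulVec, mul_invOf_self, one_mulVec]
  have hA' : A.IsHermitian := isHermitian_iff_isSymm.mpr hA
  have hB' : (borderedMatrix A α b).IsHermitian :=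
    isHermitian_iff_isSymm.mpr (isSymm_borderedMatrix α b hA)
  calc negInertia (borderedMatrix A α b)
      = sigNeg (A.toQuadraticForm'.prod (s • QuadraticMap.sq)) := by
        rw [negInertia_eq_sigNeg hB',
          (toQuadraticForm'_borderedMatrix_equivalent α b hA hc).sigNeg_eq]
    _ = negInertia A + 1 := by
        rw [sigNeg_prod, sigNeg_smul_sq_of_neg hs, negInertia_eq_sigNeg hA']

theorem stmt1 {n : ℕ} (A : Matrix (Fin n) (Fin n) ℝ) (hA : A.IsSymm)
    (hrank : n - 1 ≤ A.rank)
    (α : Fin n → ℝ) (b : ℝ) (B : Matrix (Fin (n + 1)) (Fin (n + 1)) ℝ)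
    (hB1 : ∀ i j : Fin n, B i.castSucc j.castSucc = A i j)
    (hB2 : ∀ i : Fin n, B i.castSucc (Fin.last n) = α i)
    (hB3 : ∀ i : Fin n, B (Fin.last n) i.castSucc = α i)
    (hB4 : B (Fin.last n) (Fin.last n) = b)
    (hdet : ¬(A.det = 0 ∧ B.det = 0))
    (hneg : A.det * B.det < 0) :
    negInertia B = negInertia A + 1 :=
  stmt1_general A hA α b B hB1 hB2 hB3 hB4 hneg
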